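/- arXiv:math/0310086 — 5 statements merged into one kernel-verified Lean document; each statement's English description precedes it below -/
import Mathlib

section
/- If F is a rotation-invariant polynomial function on the space of real d×d symmetric matrices (i.e., F(gxg⁻¹)=F(x) for all orthogonal g), then there exists a polynomial p in d variables such that F(x) = p(Trace(x), Trace(x²), ..., Trace(x^d)) for all symmetric x. -/
/-!
Substituting `X (i, j) ↦ δᵢⱼ Xᵢ` into a polynomial representing `F` gives a polynomial `Q` with
`Q(v) = F(diag v)`. Conjugating by permutation matrices shows that `Q` is symmetric, so by the
fundamental theorem of symmetric polynomials and Newton's identities (which divide by `k`, hence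
need characteristic zero) `Q` is a polynomial in the power sums `p₁, …, p_d`. Finally every
symmetric `x` is orthogonally conjugate to `diag v` for its eigenvalues `v`, and
`pₖ(v) = tr(diag(v)ᵏ) = tr(xᵏ)`.
-/

open Matrix MvPolynomial

namespace MvPolynomial

section Substitution

variable {σ τ S : Type*} [CommSemiring S]

lemma eval_bind₁ (v : τ → S) (f : σ → MvPolynomial τ S) (p : MvPolynomial σ S) :
    eval v (bind₁ f p) = eval (fun i => eval v (f i)) p :=
  eval₂Hom_bind₁ _ _ _ _

lemma isSymmetric_of_eval_comp_perm {R : Type*} [CommRing R] [IsDomain R] [Infinite R]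
    {Q : MvPolynomial σ R} (h : ∀ (e : Equiv.Perm σ) (v : σ → R), eval (v ∘ e) Q = eval v Q) :
    Q.IsSymmetric :=
  fun e => MvPolynomial.funext fun v => by rw [eval_rename, h]

variable [DecidableEq σ]

noncomputable def restrictDiagonal (P : MvPolynomial (σ × σ) S) : MvPolynomial σ S :=
  bind₁ (fun ij : σ × σ => diagonal X ij.1 ij.2) P

lemma eval_restrictDiagonal (v : σ → S) (P : MvPolynomial (σ × σ) S) :
    eval v (restrictDiagonal P) = eval (fun ij : σ × σ => diagonal v ij.1 ij.2) P := by
  simp only [restrictDiagonal, eval_bind₁, diagonal_apply, apply_ite, eval_X, map_zero]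

end Substitution

section PowerSums

variable {σ R : Type*} [Fintype σ]

variable (σ R) in
noncomputable def psumAlgHom [CommSemiring R] (n : ℕ) :
    MvPolynomial (Fin n) R →ₐ[R] MvPolynomial σ R :=
  aeval fun i => psum σ R (i + 1)

lemma eval_psumAlgHom [CommSemiring R] [DecidableEq σ] {n : ℕ} (v : σ → R)
    (p : MvPolynomial (Fin n) R) :
    eval v (psumAlgHom σ R n p) =
      eval (fun k : Fin n => trace (diagonal v ^ ((k : ℕ) + 1))) p := by
  simp [psumAlgHom, aeval_eq_bind₁, eval_bind₁, psum, diagonal_pow, trace_diagonal]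

lemma psum_mem_range_psumAlgHom [CommSemiring R] {n k : ℕ} (hk : 1 ≤ k) (hkn : k ≤ n) :
    psum σ R k ∈ (psumAlgHom σ R n).range :=
  ⟨X ⟨k - 1, by omega⟩, by simp [psumAlgHom, Nat.sub_add_cancel hk]⟩

variable [Field R] [CharZero R] {n : ℕ}

lemma esymm_mem_range_psumAlgHom {k : ℕ} (hkn : k ≤ n) :
    esymm σ R k ∈ (psumAlgHom σ R n).range := by
  induction k using Nat.strong_induction_on with
  | _ k ih =>
  obtain rfl | hk := k.eq_zero_or_pos
  · simp
  have hkR : (k : R) ≠ 0 := Nat.cast_ne_zero.mpr hk.ne'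
  have newton : esymm σ R k = C (k : R)⁻¹ * ((-1) ^ (k + 1) *
      ∑ a ∈ Finset.HasAntidiagonal.antidiagonal k with a.1 < k,
        (-1) ^ a.1 * esymm σ R a.1 * psum σ R a.2) := by
    rw [← mul_esymm_eq_sum, ← mul_assoc, ← C_eq_coe_nat, ← C_mul, inv_mul_cancel₀ hkR, C_1,
      one_mul]
  have sign_mem (j : ℕ) : ((-1) ^ j : MvPolynomial σ R) ∈ (psumAlgHom σ R n).range :=
    Subalgebra.pow_mem _ (Subalgebra.neg_mem _ (Subalgebra.one_mem _)) _
  rw [newton]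
  refine Subalgebra.mul_mem _ ⟨C (k : R)⁻¹, aeval_C _ _⟩ <|
    Subalgebra.mul_mem _ (sign_mem _) <| Subalgebra.sum_mem _ fun a ha => ?_
  rw [Finset.mem_filter, Finset.HasAntidiagonal.mem_antidiagonal] at ha
  exact Subalgebra.mul_mem _ (Subalgebra.mul_mem _ (sign_mem _) (ih a.1 ha.2 (by omega)))
    (psum_mem_range_psumAlgHom (by omega) (by omega))

lemma IsSymmetric.mem_range_psumAlgHom {Q : MvPolynomial σ R} (hQ : Q.IsSymmetric)
    (hn : Fintype.card σ ≤ n) : Q ∈ (psumAlgHom σ R n).range := by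
  obtain ⟨q, hq⟩ := esymmAlgHom_surjective R hn ⟨Q, hQ⟩
  have hesymm : (aeval fun i : Fin n => esymm σ R (i + 1)).range ≤ (psumAlgHom σ R n).range := by
    rw [← Algebra.adjoin_range_eq_range_aeval, Algebra.adjoin_le_iff]
    rintro _ ⟨i, rfl⟩
    exact esymm_mem_range_psumAlgHom i.2
  exact hesymm ⟨q, (esymmAlgHom_apply q).symm.trans (congrArg Subtype.val hq)⟩

end PowerSums

end MvPolynomial

namespace Matrix

variable {ι R : Type*} [Fintype ι] [DecidableEq ι] [CommRing R]

lemma IsSymm.exists_orthogonal_diagonal {x : Matrix ι ι ℝ} (hx : x.IsSymm) :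
    ∃ (g : Matrix ι ι ℝ) (v : ι → ℝ), g * gᵀ = 1 ∧ x = g * diagonal v * gᵀ := by
  have hA : x.IsHermitian := by
    rwa [Matrix.IsHermitian, conjTranspose_eq_transpose_of_trivial]
  refine ⟨hA.eigenvectorUnitary, hA.eigenvalues, ?_, ?_⟩
  · simpa [star_eq_conjTranspose, conjTranspose_eq_transpose_of_trivial] using
      (mem_unitaryGroup_iff).mp hA.eigenvectorUnitary.2
  · simpa [star_eq_conjTranspose, conjTranspose_eq_transpose_of_trivial, Function.comp] using
      hA.spectral_theorem

lemma exists_orthogonal_conj_diagonal_eq_diagonal_comp (e : Equiv.Perm ι) (v : ι → R) :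
    ∃ g : Matrix ι ι R, g * gᵀ = 1 ∧ g * diagonal v * gᵀ = diagonal (v ∘ e) := by
  refine ⟨e.toPEquiv.toMatrix, ?_, ?_⟩
  · rw [← PEquiv.toMatrix_symm, ← PEquiv.toMatrix_trans, ← Equiv.toPEquiv_symm,
      ← Equiv.toPEquiv_trans, Equiv.self_trans_symm, Equiv.toPEquiv_refl, PEquiv.toMatrix_refl]
  · rw [← PEquiv.toMatrix_symm, ← Equiv.toPEquiv_symm, PEquiv.mul_toMatrix_toPEquiv,
      PEquiv.toMatrix_toPEquiv_mul, submatrix_submatrix]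
    exact submatrix_diagonal_equiv v e

lemma trace_pow_conj_of_mul_transpose_eq_one {g : Matrix ι ι R} (hg : g * gᵀ = 1)
    (x : Matrix ι ι R) (k : ℕ) : trace ((g * x * gᵀ) ^ k) = trace (x ^ k) := by
  let u : (Matrix ι ι R)ˣ := ⟨g, gᵀ, hg, mul_eq_one_comm.mp hg⟩
  rw [show g * x * gᵀ = u * x * ↑u⁻¹ from rfl, Units.conj_pow, trace_mul_cycle, u.inv_mul,
    one_mul]

end Matrix

/-- A rotation-invariant polynomial function on the real `d × d` symmetric matrices is a
polynomial in the traces of the first `d` powers. -/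
theorem rotation_invariant_polynomial_eq_poly_of_traces
    (d : ℕ) (F : Matrix (Fin d) (Fin d) ℝ → ℝ)
    (hpoly : ∃ P : MvPolynomial (Fin d × Fin d) ℝ,
      ∀ x : Matrix (Fin d) (Fin d) ℝ, x.IsSymm →
        F x = MvPolynomial.eval (fun ij => x ij.1 ij.2) P)
    (hinv : ∀ g x : Matrix (Fin d) (Fin d) ℝ, g * gᵀ = 1 → x.IsSymm →
      F (g * x * gᵀ) = F x) :
    ∃ p : MvPolynomial (Fin d) ℝ,
      ∀ x : Matrix (Fin d) (Fin d) ℝ, x.IsSymm →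
        F x = MvPolynomial.eval (fun k : Fin d => (x ^ ((k : ℕ) + 1)).trace) p := by
  obtain ⟨P, hP⟩ := hpoly
  have hQ (v : Fin d → ℝ) : eval v (restrictDiagonal P) = F (diagonal v) := by
    rw [eval_restrictDiagonal, hP _ (isSymm_diagonal v)]
  have hQsymm : (restrictDiagonal P).IsSymmetric := isSymmetric_of_eval_comp_perm fun e v => by
    obtain ⟨g, hg, hgv⟩ := exists_orthogonal_conj_diagonal_eq_diagonal_comp e v
    rw [hQ, hQ, ← hgv, hinv g _ hg (isSymm_diagonal v)]
  obtain ⟨p, hp⟩ := (AlgHom.mem_range _).mp (hQsymm.mem_range_psumAlgHom (n := d) (by simp))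
  refine ⟨p, fun x hx => ?_⟩
  obtain ⟨g, v, hg, rfl⟩ := hx.exists_orthogonal_diagonal
  rw [hinv g _ hg (isSymm_diagonal v)]
  simp_rw [trace_pow_conj_of_mul_transpose_eq_one hg]
  rw [← eval_psumAlgHom, hp, hQ]
end

section
/- Let F be a rotation-invariant function on ℝ^d (invariant under the orthogonal group) whose restriction f(r) = F(r e₁) to a coordinate axis is C^n. Then F is C^n on all of ℝ^d. -/
open Set Topology Asymptotics

/-!
Invariance under reflections makes `F` radial, `F x = f ‖x‖` with `f t = F (t • e₁)`, and
invariance under `-1` makes `f` even. Write `f = T + R` with `T` the Taylor polynomial of degree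
`n` of `f` at `0`. By evenness `T` has only even monomials, so `T ‖x‖` is a polynomial in `‖x‖²`.
The remainder is flat: `R⁽ⁱ⁾(r) = o(r ^ (n - i))`. Rescaling `x` to the unit sphere, where all
derivatives of the norm are bounded (all unit vectors being equivalent under reflections),
Faà di Bruno's formula gives `Dʲ (R ∘ ‖·‖) x = o(‖x‖ ^ (n - j))`. A function that is `Cⁿ` off the
origin, vanishes there and has derivatives this flat is `Cⁿ`: inductively each `Dʲ` vanishes at
`0` and, being `o(‖x‖)` for `j < n`, has derivative `0` there.
-/

section Extension

variable {E W : Type*} [NormedAddCommGroup E] [NormedSpace ℝ E]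
  [NormedAddCommGroup W] [NormedSpace ℝ W]

omit [NormedSpace ℝ E] in
theorem isBigO_norm_pow_norm_pow {p q : ℕ} (h : p ≤ q) :
    (fun x : E => ‖x‖ ^ q) =O[𝓝 0] fun x => ‖x‖ ^ p :=
  h.eq_or_lt.elim (fun h => h ▸ isBigO_refl _ _) fun h => (isLittleO_norm_pow_norm_pow h).isBigO

theorem hasFDerivAt_zero_of_isLittleO_norm {g : E → W} (h0 : g 0 = 0)
    (hg : g =o[𝓝[≠] 0] fun x => ‖x‖) : HasFDerivAt g (0 : E →L[ℝ] W) 0 := by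
  rw [hasFDerivAt_iff_isLittleO_nhds_zero, ← nhdsNE_sup_pure]
  simp only [zero_add, h0, sub_zero, zero_apply]
  exact (isLittleO_norm_right.1 hg).sup (isLittleO_pure.2 h0)

theorem contDiff_of_contDiffOn_compl_zero_of_isLittleO {k : ℕ} {g : E → W}
    (hg : ContDiffOn ℝ k g {0}ᶜ) (h0 : g 0 = 0)
    (hflat : ∀ j ≤ k, iteratedFDeriv ℝ j g =o[𝓝[≠] 0] fun x => ‖x‖ ^ (k - j)) :
    ContDiff ℝ k g := by
  have hg' : ∀ x ≠ 0, ContDiffAt ℝ k g x := fun x hx =>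
    hg.contDiffAt (isOpen_compl_singleton.mem_nhds hx)
  have hflat' : ∀ j ≤ k, ∀ p ≤ k - j, iteratedFDeriv ℝ j g =o[𝓝[≠] 0] fun x => ‖x‖ ^ p :=
    fun j hj p hp =>
      (hflat j hj).trans_isBigO ((isBigO_norm_pow_norm_pow hp).mono nhdsWithin_le_nhds)
  have hderiv : ∀ j < k, iteratedFDeriv ℝ j g 0 = 0 → HasFDerivAt (iteratedFDeriv ℝ j g) 0 0 :=
    fun j hj hj0 => hasFDerivAt_zero_of_isLittleO_norm hj0 (by
      simpa using hflat' j hj.le 1 (by omega))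
  have hzero : ∀ j ≤ k, iteratedFDeriv ℝ j g 0 = 0 := by
    intro j
    induction j with
    | zero =>
      intro _
      rw [← norm_eq_zero, norm_iteratedFDeriv_zero, h0, norm_zero]
    | succ j ih =>
      intro hj
      rw [iteratedFDeriv_succ_eq_comp_left, Function.comp_apply,
        (hderiv j hj (ih (Nat.le_of_succ_le hj))).fderiv, LinearIsometryEquiv.map_zero]
  refine contDiff_iff_continuous_differentiable.2 ⟨fun j hj => ?_, fun j hj => ?_⟩
  · refine continuous_iff_continuousAt.2 fun x => ?_
    rcases eq_or_ne x 0 with rfl | hx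
    · have hlim := hflat' j (by exact_mod_cast hj) 0 (Nat.zero_le _)
      simp only [pow_zero, isLittleO_one_iff, ← hzero j (by exact_mod_cast hj)] at hlim
      exact continuousWithinAt_compl_self.1 hlim
    · exact (hg' x hx).continuousAt_iteratedFDeriv (by exact_mod_cast hj)
  · intro x
    rcases eq_or_ne x 0 with rfl | hx
    · have hj' : j < k := by exact_mod_cast hj
      exact (hderiv j hj' (hzero j hj'.le)).differentiableAt
    · exact (hg' x hx).differentiableAt_iteratedFDeriv (by exact_mod_cast hj)

end Extension

theorem norm_iteratedFDerivWithin_comp_smul {E W : Type*} [NormedAddCommGroup E]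
    [NormedSpace ℝ E] [NormedAddCommGroup W] [NormedSpace ℝ W] (g : E → W) {s : Set E}
    (hs : UniqueDiffOn ℝ s) {r : ℝ} (hr : r ≠ 0) {u : E} (hu : r • u ∈ s) (j : ℕ) :
    ‖iteratedFDerivWithin ℝ j (fun y => g (r • y)) ((r • ·) ⁻¹' s) u‖ =
      |r| ^ j * ‖iteratedFDerivWithin ℝ j g s (r • u)‖ := by
  let L : E ≃L[ℝ] E := Units.mk0 r hr • ContinuousLinearEquiv.refl ℝ E
  have hcomp := L.iteratedFDerivWithin_comp_right g hs hu j
  have hscale : ((iteratedFDerivWithin ℝ j g s (r • u)).compContinuousLinearMap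
      fun _ => (L : E →L[ℝ] E)) = r ^ j • iteratedFDerivWithin ℝ j g s (r • u) := by
    ext m
    simp [L, ContinuousMultilinearMap.map_smul_univ]
  rw [← Real.norm_eq_abs, ← norm_pow, ← norm_smul, ← hscale]
  exact congrArg norm hcomp

section Radial

variable {E : Type*} [NormedAddCommGroup E] [InnerProductSpace ℝ E]

theorem apply_eq_apply_of_norm_eq {α : Type*} {F : E → α}
    (hF : ∀ g : E ≃ₗᵢ[ℝ] E, ∀ x, F (g x) = F x) {x y : E} (hxy : ‖x‖ = ‖y‖) : F x = F y := by
  rw [← hF (Submodule.reflection (ℝ ∙ (x - y))ᗮ) x, Submodule.reflection_sub hxy]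

theorem norm_iteratedFDeriv_norm_eq_of_norm_eq (i : ℕ) {x y : E} (hxy : ‖x‖ = ‖y‖) :
    ‖iteratedFDeriv ℝ i (‖·‖) x‖ = ‖iteratedFDeriv ℝ i (‖·‖) y‖ := by
  refine apply_eq_apply_of_norm_eq (F := fun x => ‖iteratedFDeriv ℝ i (‖·‖) x‖)
    (fun g x => ?_) hxy
  simpa [Function.comp_def] using (g.norm_iteratedFDeriv_comp_right (‖·‖) x i).symm

theorem exists_bound_iteratedFDeriv_norm_of_norm_eq_one (n : ℕ) :
    ∃ D : ℝ, ∀ i, 1 ≤ i → i ≤ n → ∀ u : E, ‖u‖ = 1 → ‖iteratedFDeriv ℝ i (‖·‖) u‖ ≤ D ^ i := by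
  by_cases h : ∃ u₀ : E, ‖u₀‖ = 1
  · obtain ⟨u₀, hu₀⟩ := h
    set S := ∑ i ∈ Finset.range (n + 1), ‖iteratedFDeriv ℝ i (‖·‖) u₀‖
    have hS : 0 ≤ S := Finset.sum_nonneg fun i _ => norm_nonneg _
    refine ⟨1 + S, fun i hi1 hin u hu => ?_⟩
    rw [norm_iteratedFDeriv_norm_eq_of_norm_eq i (hu.trans hu₀.symm)]
    calc ‖iteratedFDeriv ℝ i (‖·‖) u₀‖ ≤ S :=
          Finset.single_le_sum (f := fun i => ‖iteratedFDeriv ℝ i (‖·‖) u₀‖)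
            (fun _ _ => norm_nonneg _) (Finset.mem_range.2 (Nat.lt_succ_of_le hin))
      _ ≤ 1 + S := by linarith
      _ ≤ (1 + S) ^ i := le_self_pow₀ (by linarith) (by omega)
  · exact ⟨0, fun i _ _ u hu => absurd ⟨u, hu⟩ h⟩

variable {W : Type*} [NormedAddCommGroup W] [NormedSpace ℝ W]

theorem pow_norm_mul_norm_iteratedFDeriv_comp_norm (R : ℝ → W) (j : ℕ) {x : E} (hx : x ≠ 0) :
    ‖x‖ ^ j * ‖iteratedFDeriv ℝ j (fun y => R ‖y‖) x‖ =
      ‖iteratedFDerivWithin ℝ j ((fun t => R (‖x‖ * t)) ∘ (‖·‖)) {0}ᶜ (‖x‖⁻¹ • x)‖ := by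
  have hr : 0 < ‖x‖ := norm_pos_iff.2 hx
  have hpre : (‖x‖ • ·) ⁻¹' ({0}ᶜ : Set E) = {0}ᶜ := by ext; simp [hr.ne']
  have hfactor : (fun y : E => R ‖‖x‖ • y‖) = (fun t => R (‖x‖ * t)) ∘ (‖·‖) := by
    ext; simp [norm_smul]
  have hscale := norm_iteratedFDerivWithin_comp_smul (fun y : E => R ‖y‖)
    isOpen_compl_singleton.uniqueDiffOn hr.ne' (u := ‖x‖⁻¹ • x)
    (by simpa [smul_inv_smul₀ hr.ne'] using hx) j
  rw [hpre, hfactor, smul_inv_smul₀ hr.ne', abs_of_pos hr,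
    iteratedFDerivWithin_of_isOpen j isOpen_compl_singleton hx] at hscale
  exact hscale.symm

theorem exists_norm_iteratedFDeriv_comp_norm_le {R : ℝ → W} {j : ℕ} (hR : ContDiff ℝ j R) :
    ∃ C : ℝ, ∀ x : E, x ≠ 0 → ‖x‖ ^ j * ‖iteratedFDeriv ℝ j (fun y => R ‖y‖) x‖ ≤
      C * ∑ i ∈ Finset.range (j + 1), ‖x‖ ^ i * ‖iteratedDeriv i R ‖x‖‖ := by
  obtain ⟨D, hD⟩ := exists_bound_iteratedFDeriv_norm_of_norm_eq_one (E := E) j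
  refine ⟨j.factorial * D ^ j, fun x hx => ?_⟩
  have hr : 0 < ‖x‖ := norm_pos_iff.2 hx
  set r := ‖x‖
  set u : E := r⁻¹ • x
  have hu : ‖u‖ = 1 := by
    simp only [u, norm_smul, norm_inv, Real.norm_of_nonneg hr.le]
    exact inv_mul_cancel₀ hr.ne'
  have hu0 : u ∈ ({0}ᶜ : Set E) := by
    rw [mem_compl_singleton_iff, ← norm_ne_zero_iff, hu]
    exact one_ne_zero
  have hnorm : ContDiffOn ℝ j (‖·‖ : E → ℝ) {0}ᶜ := fun y hy =>
    (contDiffAt_norm ℝ hy).contDiffWithinAt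
  have hprofile : ∀ i ≤ j, ‖iteratedFDerivWithin ℝ i (fun t => R (r * t)) univ ‖u‖‖ ≤
      ∑ i ∈ Finset.range (j + 1), r ^ i * ‖iteratedDeriv i R r‖ := by
    intro i hi
    rw [iteratedFDerivWithin_univ, norm_iteratedFDeriv_eq_norm_iteratedDeriv,
      iteratedDeriv_comp_const_smul (hR.of_le (by exact_mod_cast hi)), hu]
    simp only [mul_one, norm_smul, norm_pow, Real.norm_of_nonneg hr.le]
    exact Finset.single_le_sum (f := fun i => r ^ i * ‖iteratedDeriv i R r‖)
      (fun _ _ => by positivity) (Finset.mem_range.2 (Nat.lt_succ_of_le hi))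
  have hD' : ∀ i, 1 ≤ i → i ≤ j → ‖iteratedFDerivWithin ℝ i (‖·‖) {0}ᶜ u‖ ≤ D ^ i :=
    fun i hi1 hij => by
      rw [iteratedFDerivWithin_of_isOpen i isOpen_compl_singleton hu0]
      exact hD i hi1 hij u hu
  rw [pow_norm_mul_norm_iteratedFDeriv_comp_norm R j hx]
  refine (norm_iteratedFDerivWithin_comp_le (g := fun t => R (r * t))
    (hR.comp (contDiff_const.mul contDiff_id)).contDiffOn hnorm le_rfl uniqueDiffOn_univ
    isOpen_compl_singleton.uniqueDiffOn (mapsTo_univ _ _) hu0 hprofile hD').trans_eq ?_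
  ring

theorem isLittleO_iteratedFDeriv_comp_norm {R : ℝ → W} {n j : ℕ} (hR : ContDiff ℝ n R)
    (hflat : ∀ i ≤ n, iteratedDeriv i R =o[𝓝 0] fun r => r ^ (n - i)) (hj : j ≤ n) :
    iteratedFDeriv ℝ j (fun x : E => R ‖x‖) =o[𝓝[≠] 0] fun x => ‖x‖ ^ (n - j) := by
  obtain ⟨C, hC⟩ :=
    exists_norm_iteratedFDeriv_comp_norm_le (E := E) (hR.of_le (by exact_mod_cast hj))
  have hsum : (fun r : ℝ => C * ∑ i ∈ Finset.range (j + 1), r ^ i * ‖iteratedDeriv i R r‖)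
      =o[𝓝 0] fun r => r ^ n := by
    refine IsLittleO.const_mul_left (IsLittleO.fun_sum fun i hi => ?_) C
    have hin : i ≤ n := by have := Finset.mem_range.1 hi; omega
    refine ((isBigO_refl (fun r : ℝ => r ^ i) _).mul_isLittleO
      (hflat i hin).norm_left).congr_right fun r => ?_
    rw [← pow_add, Nat.add_sub_cancel' hin]
  have hsum' := hsum.comp_tendsto
    (tendsto_norm_zero.mono_left (nhdsWithin_le_nhds (a := (0 : E)) (s := {0}ᶜ)))
  refine IsLittleO.of_bound fun c hc => ?_
  filter_upwards [hsum'.bound hc, self_mem_nhdsWithin] with x hbound hx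
  have hr : 0 < ‖x‖ := norm_pos_iff.2 hx
  have hle : ‖x‖ ^ j * ‖iteratedFDeriv ℝ j (fun y => R ‖y‖) x‖ ≤
      ‖x‖ ^ j * (c * ‖x‖ ^ (n - j)) :=
    calc _ ≤ C * ∑ i ∈ Finset.range (j + 1), ‖x‖ ^ i * ‖iteratedDeriv i R ‖x‖‖ := hC x hx
      _ ≤ c * ‖x‖ ^ n := (le_abs_self _).trans (by simpa using hbound)
      _ = ‖x‖ ^ j * (c * ‖x‖ ^ (n - j)) := by
        rw [← Nat.add_sub_cancel' hj, Nat.add_sub_cancel_left, pow_add]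
        ring
  rw [norm_pow, norm_norm]
  exact le_of_mul_le_mul_left hle (pow_pos hr j)

theorem contDiff_comp_norm_of_isLittleO {R : ℝ → W} {n : ℕ} (hR : ContDiff ℝ n R)
    (hflat : ∀ i ≤ n, iteratedDeriv i R =o[𝓝 0] fun r => r ^ (n - i)) :
    ContDiff ℝ n (fun x : E => R ‖x‖) := by
  have hR0 : R 0 = 0 := by
    have hlim := (hflat 0 (Nat.zero_le n)).trans_isBigO
      (((continuous_pow n).tendsto 0).isBigO_one ℝ)
    rw [iteratedDeriv_zero, isLittleO_one_iff] at hlim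
    exact tendsto_nhds_unique (hR.continuous.tendsto 0) hlim
  refine contDiff_of_contDiffOn_compl_zero_of_isLittleO
    (fun x hx => (hR.contDiffAt.comp x (contDiffAt_norm ℝ hx)).contDiffWithinAt)
    (by simpa using hR0) fun j hj => isLittleO_iteratedFDeriv_comp_norm hR hflat hj

end Radial

section Taylor

variable {W : Type*} [NormedAddCommGroup W] [NormedSpace ℝ W]

theorem contDiff_taylorWithinEval (f : ℝ → W) (n : ℕ) (s : Set ℝ) (x₀ : ℝ) {m : WithTop ℕ∞} :
    ContDiff ℝ m (taylorWithinEval f n s x₀) := by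
  have : taylorWithinEval f n s x₀ = fun x => ∑ k ∈ Finset.range (n + 1),
      ((k.factorial : ℝ)⁻¹ * (x - x₀) ^ k) • iteratedDerivWithin k f s x₀ :=
    funext (taylor_within_apply f n s x₀)
  rw [this]
  fun_prop

theorem iteratedDeriv_taylorWithinEval_univ (f : ℝ → W) (m i : ℕ) (x₀ : ℝ) :
    iteratedDeriv i (taylorWithinEval f (m + i) univ x₀) =
      taylorWithinEval (iteratedDeriv i f) m univ x₀ := by
  induction i generalizing f with
  | zero => simp
  | succ i ih =>
    have hderiv : deriv (taylorWithinEval f (m + i + 1) univ x₀) =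
        taylorWithinEval (deriv f) (m + i) univ x₀ := by
      ext x
      rw [(hasDerivAt_taylorWithinEval_succ f (m + i)).deriv, derivWithin_univ]
    rw [iteratedDeriv_succ', ← add_assoc, hderiv, ih, ← iteratedDeriv_succ']

theorem isLittleO_iteratedDeriv_sub_taylorWithinEval {f : ℝ → W} {n i : ℕ}
    (hf : ContDiff ℝ n f) (hi : i ≤ n) (x₀ : ℝ) :
    iteratedDeriv i (f - taylorWithinEval f n univ x₀) =o[𝓝 x₀]
      fun x => (x - x₀) ^ (n - i) := by
  obtain ⟨m, rfl⟩ := Nat.exists_eq_add_of_le' hi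
  have hfi : ContDiff ℝ m (iteratedDeriv i f) := by
    rw [iteratedDeriv_eq_iterate]
    exact hf.iterate_deriv' m i
  have hsub : iteratedDeriv i (f - taylorWithinEval f (m + i) univ x₀) =
      fun x => iteratedDeriv i f x - taylorWithinEval (iteratedDeriv i f) m univ x₀ x := by
    ext x
    rw [iteratedDeriv_sub (hf.of_le (by exact_mod_cast hi)).contDiffAt
      (contDiff_taylorWithinEval _ _ _ _).contDiffAt, iteratedDeriv_taylorWithinEval_univ]
  rw [hsub, Nat.add_sub_cancel]
  exact taylor_isLittleO_univ hfi

end Taylor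

section Even

variable {W : Type*} [NormedAddCommGroup W] [NormedSpace ℝ W]

theorem Function.Even.iteratedDeriv_eq_zero_of_odd {f : ℝ → W} (hf : Function.Even f) {k : ℕ}
    (hk : Odd k) : iteratedDeriv k f 0 = 0 := by
  have h := iteratedDeriv_comp_neg k f 0
  rw [show (fun x => f (-x)) = f from funext hf, neg_zero, hk.neg_one_pow, neg_one_smul] at h
  have h2 : (2 : ℝ) • iteratedDeriv k f 0 = 0 := by
    rw [two_smul]
    nth_rw 2 [h]
    exact add_neg_cancel _
  exact (smul_eq_zero.1 h2).resolve_left two_ne_zero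

variable {E : Type*} [NormedAddCommGroup E] [InnerProductSpace ℝ E]

theorem Function.Even.contDiff_taylorWithinEval_norm {f : ℝ → W} (hf : Function.Even f) (n : ℕ)
    {m : WithTop ℕ∞} : ContDiff ℝ m fun x : E => taylorWithinEval f n univ 0 ‖x‖ := by
  simp_rw [taylor_within_apply, sub_zero, iteratedDerivWithin_univ]
  refine ContDiff.sum fun k _ => ?_
  rcases Nat.even_or_odd k with ⟨l, rfl⟩ | hk
  · simp_rw [← two_mul, pow_mul]
    exact (contDiff_const.mul ((contDiff_norm_sq ℝ).pow l)).smul contDiff_const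
  · simp only [hf.iteratedDeriv_eq_zero_of_odd hk, smul_zero]
    exact contDiff_const

theorem Function.Even.contDiff_comp_norm {f : ℝ → W} {n : ℕ} (heven : Function.Even f)
    (hf : ContDiff ℝ n f) : ContDiff ℝ n fun x : E => f ‖x‖ := by
  set T := taylorWithinEval f n univ 0
  have hdecomp : (fun x : E => f ‖x‖) = fun x => T ‖x‖ + (f - T) ‖x‖ := by
    ext
    simp
  rw [hdecomp]
  refine (heven.contDiff_taylorWithinEval_norm n).add
    (contDiff_comp_norm_of_isLittleO (hf.sub (contDiff_taylorWithinEval _ _ _ _)) fun i hi => ?_)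
  simpa using isLittleO_iteratedDeriv_sub_taylorWithinEval hf hi 0

end Even

/-- A rotation-invariant function on `ℝ^d` whose restriction to the first coordinate axis is
`C^n` is itself `C^n`. -/
theorem rotation_invariant_contDiff_of_axis_restriction
    (d n : ℕ) (hd : 0 < d) (F : EuclideanSpace ℝ (Fin d) → ℝ)
    (hinv : ∀ g : EuclideanSpace ℝ (Fin d) ≃ₗᵢ[ℝ] EuclideanSpace ℝ (Fin d),
      ∀ x, F (g x) = F x)
    (hax : ContDiff ℝ n fun t : ℝ =>
      F (t • EuclideanSpace.single (⟨0, hd⟩ : Fin d) (1 : ℝ))) :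
    ContDiff ℝ n F := by
  set e : EuclideanSpace ℝ (Fin d) := EuclideanSpace.single ⟨0, hd⟩ 1
  have he : ‖e‖ = 1 := by simp [e]
  have hradial : F = fun x => F (‖x‖ • e) :=
    funext fun x => apply_eq_apply_of_norm_eq hinv (by simp [norm_smul, he])
  have heven : Function.Even fun t : ℝ => F (t • e) := fun t => by
    simpa [neg_smul] using hinv (LinearIsometryEquiv.neg ℝ) (t • e)
  rw [hradial]
  exact heven.contDiff_comp_norm hax
end

section
/- Let x₀ be a real d×d symmetric matrix, 𝒮 the symmetric matrices, 𝔤 the skew-symmetric matrices, 𝒮₀ the symmetric matrices commuting with x₀, and 𝔤₀ the skew-symmetric matrices commuting with x₀. Then the image of the map ad(x₀): 𝔤 → 𝒮, z ↦ [x₀,z], equals the orthogonal complement of 𝒮₀ in 𝒮, and moreover [𝔤₀^⊥, x₀] = 𝒮₀^⊥. -/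
/-!
For symmetric `x₀`, `ad x₀` is self-adjoint for the Frobenius inner product `tr (x yᵀ)`, so its
range is the orthogonal complement of its kernel, the commutant of `x₀`. A symmetric `y`
orthogonal to `𝒮₀` is orthogonal to the whole commutant, because it is orthogonal to every skew
matrix; hence `y = [x₀, u]`, and since `ad x₀` anticommutes with transposition, the skew part of
`u` does the job as well. For `[𝔤₀^⊥, x₀]`, subtracting from a skew `z` its orthogonal projection
onto `𝔤₀` changes neither its skewness nor `[x₀, z]`.
-/

open Matrix RealInnerProductSpace

namespace Matrix

variable {m n R : Type*} [Fintype m] [Fintype n] [CommRing R]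

lemma IsSymm.trace_mul_transpose {y : Matrix n n R} (hy : y.IsSymm) (u : Matrix n n R) :
    (y * uᵀ).trace = (y * u).trace := by
  rw [← trace_transpose, transpose_mul, transpose_transpose, hy.eq, trace_mul_comm]

section ad

variable [DecidableEq n]

def ad (x : Matrix n n R) : Matrix n n R →ₗ[R] Matrix n n R :=
  LinearMap.mulLeft R x - LinearMap.mulRight R x

@[simp]
lemma ad_apply (x z : Matrix n n R) : ad x z = x * z - z * x := rfl

lemma mem_ker_ad {x u : Matrix n n R} : u ∈ LinearMap.ker (ad x) ↔ u * x = x * u := by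
  rw [LinearMap.mem_ker, ad_apply, sub_eq_zero, eq_comm]

lemma IsSymm.ad_transpose {x : Matrix n n R} (hx : x.IsSymm) (u : Matrix n n R) :
    ad x uᵀ = -(ad x u)ᵀ := by
  simp only [ad_apply, transpose_sub, transpose_mul, hx.eq, neg_sub]

lemma IsSymm.isSymm_ad {x z : Matrix n n R} (hx : x.IsSymm) (hz : zᵀ = -z) :
    (ad x z).IsSymm := by
  rw [IsSymm, ← neg_neg ((ad x z)ᵀ), ← hx.ad_transpose, hz, map_neg, neg_neg]

lemma trace_ad_mul_eq_zero {x s : Matrix n n R} (hs : s * x = x * s) (z : Matrix n n R) :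
    (ad x z * s).trace = 0 := by
  rw [ad_apply, sub_mul, trace_sub, trace_mul_cycle x z s, hs, trace_mul_cycle z x s,
    trace_mul_cycle s z x, sub_self]

def skewCentralizer (x : Matrix n n R) : Submodule R (Matrix n n R) :=
  skewAdjointMatricesSubmodule 1 ⊓ LinearMap.ker (ad x)

lemma mem_skewCentralizer {x w : Matrix n n R} :
    w ∈ skewCentralizer x ↔ wᵀ = -w ∧ w * x = x * w := by
  simp only [skewCentralizer, Submodule.mem_inf, mem_skewAdjointMatricesSubmodule,
    Matrix.IsSkewAdjoint, Matrix.IsAdjointPair, mul_one, one_mul, mem_ker_ad]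

end ad

section Frobenius

/- Mathlib fixes no norm on matrices, so the Frobenius inner product is only a local instance. -/
noncomputable abbrev frobeniusInnerCore : InnerProductSpace.Core ℝ (Matrix m n ℝ) where
  inner x y := (x * yᵀ).trace
  conj_inner_symm x y := by
    rw [conj_trivial, ← trace_transpose, transpose_mul, transpose_transpose]
  re_inner_nonneg x := by
    simpa [conjTranspose_eq_transpose_of_trivial] using
      (posSemidef_self_mul_conjTranspose x).trace_nonneg
  definite x hx :=
    trace_mul_conjTranspose_self_eq_zero_iff.1 (by rwa [conjTranspose_eq_transpose_of_trivial])
  add_left x y z := by rw [Matrix.add_mul, trace_add]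
  smul_left x y r := by rw [smul_mul, trace_smul, conj_trivial, smul_eq_mul]

noncomputable abbrev frobeniusInnerNormedAddCommGroup : NormedAddCommGroup (Matrix m n ℝ) :=
  frobeniusInnerCore.toNormedAddCommGroup

attribute [local instance] frobeniusInnerNormedAddCommGroup

noncomputable abbrev frobeniusInnerProductSpace : InnerProductSpace ℝ (Matrix m n ℝ) :=
  .ofCore frobeniusInnerCore.toCore

attribute [local instance] frobeniusInnerProductSpace

lemma frobenius_inner_eq (x y : Matrix m n ℝ) : ⟪x, y⟫ = (x * yᵀ).trace := rfl

variable [DecidableEq n]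

lemma isSymmetric_ad {x : Matrix n n ℝ} (hx : x.IsSymm) : (ad x).IsSymmetric := by
  intro z w
  simp only [ad_apply, frobenius_inner_eq, transpose_sub, transpose_mul, hx.eq, sub_mul,
    mul_sub, trace_sub, ← mul_assoc]
  rw [mul_assoc x, trace_mul_comm x]

lemma range_ad_eq_orthogonal_ker {x : Matrix n n ℝ} (hx : x.IsSymm) :
    LinearMap.range (ad x) = (LinearMap.ker (ad x))ᗮ := by
  rw [← (isSymmetric_ad hx).orthogonal_range, Submodule.orthogonal_orthogonal]

lemma IsSymm.exists_skew_eq_ad {x y : Matrix n n ℝ} (hx : x.IsSymm) (hy : y.IsSymm)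
    (h : ∀ s : Matrix n n ℝ, s.IsSymm → s * x = x * s → (y * sᵀ).trace = 0) :
    ∃ z, zᵀ = -z ∧ y = ad x z := by
  have hy_orth : y ∈ (LinearMap.ker (ad x))ᗮ := by
    refine (Submodule.mem_orthogonal' _ _).2 fun u hu => ?_
    have hux : u * x = x * u := mem_ker_ad.1 hu
    have huT : uᵀ * x = x * uᵀ := by simpa [hx.eq] using (congrArg Matrix.transpose hux).symm
    -- `y` pairs equally with `u` and `uᵀ`, and `u + uᵀ ∈ 𝒮₀`.
    have := h (u + uᵀ) (isSymm_add_transpose_self u) (by rw [add_mul, mul_add, hux, huT])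
    rw [transpose_add, transpose_transpose, mul_add, trace_add, hy.trace_mul_transpose] at this
    rw [frobenius_inner_eq, hy.trace_mul_transpose]
    linarith
  obtain ⟨u, rfl⟩ : y ∈ LinearMap.range (ad x) := range_ad_eq_orthogonal_ker hx ▸ hy_orth
  refine ⟨(1 / 2 : ℝ) • (u - uᵀ), ?_, ?_⟩
  · rw [transpose_smul, transpose_sub, transpose_transpose, ← smul_neg, neg_sub]
  · rw [map_smul, map_sub, hx.ad_transpose, hy.eq, sub_neg_eq_add, ← two_smul ℝ, smul_smul]
    norm_num

lemma IsSymm.setOf_ad_skew_eq {x : Matrix n n ℝ} (hx : x.IsSymm) :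
    {y | ∃ z, zᵀ = -z ∧ y = ad x z} =
      {y | y.IsSymm ∧ ∀ s : Matrix n n ℝ, s.IsSymm → s * x = x * s → (y * sᵀ).trace = 0} := by
  ext y
  constructor
  · rintro ⟨z, hz, rfl⟩
    exact ⟨hx.isSymm_ad hz, fun s hs hsx => by rw [hs.eq]; exact trace_ad_mul_eq_zero hsx z⟩
  · rintro ⟨hy, h⟩
    exact hx.exists_skew_eq_ad hy h

lemma setOf_skew_orthogonal_lie_eq (x : Matrix n n ℝ) :
    {y | ∃ z, zᵀ = -z ∧ (∀ w : Matrix n n ℝ, wᵀ = -w → w * x = x * w → (z * wᵀ).trace = 0) ∧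
        y = z * x - x * z} = {y | ∃ z, zᵀ = -z ∧ y = ad x z} := by
  ext y
  constructor
  · rintro ⟨z, hz, -, rfl⟩
    exact ⟨-z, by rw [transpose_neg, hz], by rw [ad_apply]; noncomm_ring⟩
  · rintro ⟨z, hz, rfl⟩
    set K := skewCentralizer x
    obtain ⟨hp, hpx⟩ := mem_skewCentralizer.1 (K.starProjection_apply_mem (-z))
    refine ⟨-z - K.starProjection (-z), ?_, fun w hw hwx => ?_, ?_⟩
    · rw [transpose_sub, transpose_neg, hz, hp]
      abel
    · exact Submodule.inner_left_of_mem_orthogonal (mem_skewCentralizer.2 ⟨hw, hwx⟩)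
        (K.sub_starProjection_mem_orthogonal (-z))
    · rw [ad_apply, sub_mul, mul_sub, hpx]
      noncomm_ring

end Frobenius

end Matrix

/-- For a symmetric matrix `x₀`, the image of `ad(x₀) : 𝔤 → 𝒮` is the orthogonal complement
(in the Frobenius inner product) of the symmetric matrices commuting with `x₀`, and moreover
`[𝔤₀^⊥, x₀] = 𝒮₀^⊥`. -/
theorem range_ad_eq_orthocomplement (d : ℕ) (x₀ : Matrix (Fin d) (Fin d) ℝ)
    (hx₀ : x₀.IsSymm) :
    ({y | ∃ z : Matrix (Fin d) (Fin d) ℝ, zᵀ = -z ∧ y = x₀ * z - z * x₀} =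
      {y : Matrix (Fin d) (Fin d) ℝ | y.IsSymm ∧
        ∀ s : Matrix (Fin d) (Fin d) ℝ, s.IsSymm → s * x₀ = x₀ * s → (y * sᵀ).trace = 0}) ∧
    ({y | ∃ z : Matrix (Fin d) (Fin d) ℝ, zᵀ = -z ∧
        (∀ w : Matrix (Fin d) (Fin d) ℝ, wᵀ = -w → w * x₀ = x₀ * w → (z * wᵀ).trace = 0) ∧
        y = z * x₀ - x₀ * z} =
      {y : Matrix (Fin d) (Fin d) ℝ | y.IsSymm ∧
        ∀ s : Matrix (Fin d) (Fin d) ℝ, s.IsSymm → s * x₀ = x₀ * s → (y * sᵀ).trace = 0}) := by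
  have range_eq := hx₀.setOf_ad_skew_eq
  exact ⟨range_eq, (setOf_skew_orthogonal_lie_eq x₀).trans range_eq⟩
end

section
/- Fix a symmetric matrix ξ and a skew-symmetric d×d real matrix a, and define δ(a,ξ) : 𝒮^d → 𝒮^d by δ(a,ξ)(π)ᵢ = πᵢξ(Σⱼ aᵢⱼπⱼ) + (Σⱼ aᵢⱼπⱼ)ξπᵢ. Then δ(a,ξ) restricted to the flag manifold ℱ is tangent to ℱ: any integral curve π(t) of this vector field starting in ℱ remains in ℱ, i.e., preserves Σᵢπᵢ(t) = I, πᵢ(t)πⱼ(t) = 0 for i≠j, and πᵢ(t)² = πᵢ(t). -/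
/-!
Summing `δ(a,ξ)(π)ᵢ = flagField a ξ π i` over `i` gives `Σᵢⱼ (aᵢⱼ + aⱼᵢ) πᵢξπⱼ = 0`, so `Σᵢ πᵢ` is
constant along an integral curve. For the other relations look at the defect
`Dᵢⱼ = πᵢπⱼ - δᵢⱼπᵢ`: expanding `δᵢπⱼ + πᵢδⱼ - δᵢⱼδᵢ` and using `aᵢⱼ + aⱼᵢ = 0` once more, its
derivative is `flagDefectField a ξ π D`, linear in `D` with coefficients continuous in `t`.
As `D(0) = 0`, uniqueness of solutions of linear ODEs forces `D ≡ 0`.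
-/

open Set Finset Matrix

theorem eq_zero_of_hasDerivAt_clm_apply_self {E : Type*} [NormedAddCommGroup E] [NormedSpace ℝ E]
    {L : ℝ → E →L[ℝ] E} {f : ℝ → E} {t₀ : ℝ} (hL : Continuous L)
    (hf : ∀ t, HasDerivAt f (L t (f t)) t) (hf₀ : f t₀ = 0) (t : ℝ) : f t = 0 := by
  set r := |t - t₀| + 1
  obtain ⟨C, hC⟩ := (isCompact_Icc (a := t₀ - r) (b := t₀ + r)).exists_bound_of_continuousOn
    hL.continuousOn
  have hlip : ∀ s ∈ Icc (t₀ - r) (t₀ + r), LipschitzWith C.toNNReal (L s) := fun s hs =>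
    (L s).lipschitz.weaken <| by
      rw [← NNReal.coe_le_coe, coe_nnnorm, Real.coe_toNNReal']
      exact (hC s hs).trans (le_max_left _ _)
  have hf_cont : Continuous f := continuous_iff_continuousAt.2 fun s => (hf s).continuousAt
  refine ODE_solution_unique_of_mem_Icc (v := fun s x => L s x) (s := fun _ => univ)
    (fun s hs => (hlip s (Ioo_subset_Icc_self hs)).lipschitzOnWith)
    (t₀ := t₀) ⟨by grind, by grind⟩ hf_cont.continuousOn (fun s _ => hf s) (fun _ _ => trivial)
    continuousOn_const (fun s _ => by simpa using hasDerivAt_const s (0 : E))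
    (fun _ _ => trivial) hf₀ ⟨by grind, by grind⟩

section Algebra

variable {ι R A : Type*} [CommRing R] [Ring A]

theorem add_swap_eq_zero_of_transpose_eq_neg {a : Matrix ι ι R} (ha : aᵀ = -a) (i j : ι) :
    a i j + a j i = 0 := by
  have h : a i j = -a j i := by simpa using congrFun (congrFun ha j) i
  rw [h, neg_add_cancel]

section Defect

variable [DecidableEq ι]

def flagDefect (p : ι → A) (i j : ι) : A :=
  p i * p j - if i = j then p i else 0

theorem flagDefect_eq_zero_iff {p : ι → A} :
    flagDefect p = 0 ↔ (∀ i, p i * p i = p i) ∧ ∀ i j, i ≠ j → p i * p j = 0 := by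
  simp only [funext_iff, flagDefect, Pi.zero_apply, sub_eq_zero]
  constructor
  · intro h
    exact ⟨fun i => by simpa using h i i, fun i j hij => by simpa [hij] using h i j⟩
  · rintro ⟨hidem, horth⟩ i j
    split_ifs with hij
    · subst hij; exact hidem i
    · exact horth i j hij

end Defect

variable [Algebra R A] [Fintype ι]

def flagField (a : Matrix ι ι R) (ξ : A) (p : ι → A) (i : ι) : A :=
  p i * ξ * (∑ j, a i j • p j) + (∑ j, a i j • p j) * ξ * p i

theorem sum_flagField_eq_zero {a : Matrix ι ι R} (ha : aᵀ = -a) (ξ : A) (p : ι → A) :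
    ∑ i, flagField a ξ p i = 0 := by
  simp only [flagField, mul_sum, sum_mul, mul_smul_comm, smul_mul_assoc, sum_add_distrib]
  rw [sum_comm (f := fun i j => a i j • (p j * ξ * p i))]
  simp only [← sum_add_distrib, ← add_smul, add_swap_eq_zero_of_transpose_eq_neg ha, zero_smul,
    sum_const_zero]

@[simps]
def flagDefectField (a : Matrix ι ι R) (ξ : A) (p : ι → A) : (ι → ι → A) →ₗ[R] (ι → ι → A) where
  toFun x i j := (∑ k, a i k • p k) * ξ * x i j + x i j * ξ * (∑ k, a j k • p k)
    + ∑ k, a i k • (p i * ξ * x k j) + ∑ k, a j k • (x i k * ξ * p j)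
  map_add' x y := by
    ext i j
    simp only [Pi.add_apply, mul_add, add_mul, smul_add, sum_add_distrib]
    abel
  map_smul' c x := by
    ext i j
    simp only [Pi.smul_apply, mul_smul_comm, smul_mul_assoc, smul_add, smul_sum, smul_comm c,
      RingHom.id_apply]

variable [DecidableEq ι]

theorem flagField_mul_add_mul_flagField (a : Matrix ι ι R) (ξ : A) (p : ι → A) (i j : ι) :
    flagField a ξ p i * p j + p i * flagField a ξ p j - (if i = j then flagField a ξ p i else 0)
      = flagDefectField a ξ p (flagDefect p) i j + (a i j + a j i) • (p i * ξ * p j) := by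
  simp only [flagDefectField_apply, flagDefect, flagField, mul_sub, sub_mul, smul_sub, mul_ite,
    ite_mul, mul_zero, zero_mul, smul_ite, smul_zero, sum_sub_distrib, sum_ite_eq, sum_ite_eq',
    Finset.mem_univ, if_true, mul_sum, sum_mul, mul_smul_comm, smul_mul_assoc, add_mul, mul_add,
    mul_assoc, add_smul]
  split_ifs with h
  · subst h; abel
  · simp only [sum_const_zero]; abel

end Algebra

section Analysis

variable {ι A : Type*} [Fintype ι] [NormedRing A] [NormedAlgebra ℝ A] {a : Matrix ι ι ℝ} {ξ : A}
  {p : ℝ → ι → A}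

theorem hasDerivAt_sum_of_flagField (ha : aᵀ = -a) {t : ℝ}
    (hp : HasDerivAt p (flagField a ξ (p t)) t) : HasDerivAt (fun s => ∑ i, p s i) 0 t := by
  rw [← sum_flagField_eq_zero ha ξ (p t)]
  exact HasDerivAt.fun_sum fun i _ => hasDerivAt_pi.1 hp i

theorem sum_apply_eq_of_hasDerivAt_flagField (ha : aᵀ = -a)
    (hp : ∀ t, HasDerivAt p (flagField a ξ (p t)) t) (s t : ℝ) : ∑ i, p s i = ∑ i, p t i :=
  is_const_of_deriv_eq_zero (fun u => (hasDerivAt_sum_of_flagField ha (hp u)).differentiableAt)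
    (fun u => (hasDerivAt_sum_of_flagField ha (hp u)).deriv) s t

section FiniteDimensional

variable [FiniteDimensional ℝ A]

theorem continuous_toContinuousLinearMap_flagDefectField (a : Matrix ι ι ℝ) (ξ : A)
    (hp : Continuous p) :
    Continuous fun t => LinearMap.toContinuousLinearMap (flagDefectField a ξ (p t)) := by
  refine continuous_clm_apply.2 fun x => continuous_pi fun i => continuous_pi fun j => ?_
  simp only [LinearMap.coe_toContinuousLinearMap', flagDefectField_apply]
  fun_prop

end FiniteDimensional

variable [DecidableEq ι]

theorem hasDerivAt_flagDefect {p' : ι → A} {t : ℝ} (hp : HasDerivAt p p' t) :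
    HasDerivAt (fun s => flagDefect (p s))
      (fun i j => p' i * p t j + p t i * p' j - if i = j then p' i else 0) t := by
  refine hasDerivAt_pi.2 fun i => hasDerivAt_pi.2 fun j => ?_
  have hpi := hasDerivAt_pi.1 hp
  refine ((hpi i).mul (hpi j)).sub ?_
  split_ifs
  · exact hpi i
  · exact hasDerivAt_const _ _

theorem hasDerivAt_flagDefect_of_flagField (ha : aᵀ = -a) {t : ℝ}
    (hp : HasDerivAt p (flagField a ξ (p t)) t) :
    HasDerivAt (fun s => flagDefect (p s)) (flagDefectField a ξ (p t) (flagDefect (p t))) t := by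
  convert hasDerivAt_flagDefect hp using 1
  ext i j
  rw [flagField_mul_add_mul_flagField, add_swap_eq_zero_of_transpose_eq_neg ha, zero_smul,
    add_zero]

theorem flagDefect_eq_zero_of_hasDerivAt_flagField [FiniteDimensional ℝ A] (ha : aᵀ = -a)
    (hp : ∀ t, HasDerivAt p (flagField a ξ (p t)) t) {t₀ : ℝ} (h₀ : flagDefect (p t₀) = 0)
    (t : ℝ) : flagDefect (p t) = 0 := by
  have hp_cont : Continuous p := continuous_iff_continuousAt.2 fun s => (hp s).continuousAt
  exact eq_zero_of_hasDerivAt_clm_apply_self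
    (continuous_toContinuousLinearMap_flagDefectField a ξ hp_cont)
    (fun s => hasDerivAt_flagDefect_of_flagField ha (hp s)) h₀ t

end Analysis

attribute [local instance] Matrix.frobeniusNormedRing Matrix.frobeniusNormedAlgebra

theorem flag_vector_field_tangent_general (d : ℕ)
    (ξ a : Matrix (Fin d) (Fin d) ℝ) (ha : aᵀ = -a)
    (π : ℝ → Fin d → Matrix (Fin d) (Fin d) ℝ)
    (hode : ∀ (t : ℝ) (i : Fin d),
      HasDerivAt (fun s => π s i)
        (π t i * ξ * (∑ j, a i j • π t j) + (∑ j, a i j • π t j) * ξ * π t i) t)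
    (h0 : (∀ i, π 0 i * π 0 i = π 0 i ∧ (π 0 i).trace = 1) ∧
      (∀ i j, i ≠ j → π 0 i * π 0 j = 0) ∧ (∑ i, π 0 i) = 1) :
    ∀ t : ℝ,
      (∑ i, π t i) = 1 ∧
      (∀ i j, i ≠ j → π t i * π t j = 0) ∧
      (∀ i, π t i * π t i = π t i) := by
  obtain ⟨hidem₀, horth₀, hsum₀⟩ := h0
  have hπ : ∀ t, HasDerivAt π (flagField a ξ (π t)) t := fun t => hasDerivAt_pi.2 (hode t)
  have hdefect₀ : flagDefect (π 0) = 0 :=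
    flagDefect_eq_zero_iff.2 ⟨fun i => (hidem₀ i).1, horth₀⟩
  intro t
  obtain ⟨hidem, horth⟩ :=
    flagDefect_eq_zero_iff.1 (flagDefect_eq_zero_of_hasDerivAt_flagField ha hπ hdefect₀ t)
  exact ⟨(sum_apply_eq_of_hasDerivAt_flagField ha hπ t 0).trans hsum₀, horth, hidem⟩

/-- The vector field `δ(a,ξ)` on `𝒮^d` defined by
`δ(a,ξ)(π)ᵢ = πᵢ ξ (Σⱼ aᵢⱼπⱼ) + (Σⱼ aᵢⱼπⱼ) ξ πᵢ` is tangent to the flag manifold: an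
integral curve of symmetric matrices starting at a flag preserves `Σᵢπᵢ = 1`, `πᵢπⱼ = 0`
for `i ≠ j`, and `πᵢ² = πᵢ`. -/
theorem flag_vector_field_tangent (d : ℕ)
    (ξ a : Matrix (Fin d) (Fin d) ℝ) (hξ : ξ.IsSymm) (ha : aᵀ = -a)
    (π : ℝ → Fin d → Matrix (Fin d) (Fin d) ℝ)
    (hsymm : ∀ t i, (π t i).IsSymm)
    (hode : ∀ (t : ℝ) (i : Fin d),
      HasDerivAt (fun s => π s i)
        (π t i * ξ * (∑ j, a i j • π t j) + (∑ j, a i j • π t j) * ξ * π t i) t)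
    (h0 : (∀ i, π 0 i * π 0 i = π 0 i ∧ (π 0 i).trace = 1) ∧
      (∀ i j, i ≠ j → π 0 i * π 0 j = 0) ∧ (∑ i, π 0 i) = 1) :
    ∀ t : ℝ,
      (∑ i, π t i) = 1 ∧
      (∀ i j, i ≠ j → π t i * π t j = 0) ∧
      (∀ i, π t i * π t i = π t i) :=
  flag_vector_field_tangent_general d ξ a ha π hode h0
end

section
/- Let f : ℝ^d × ℱ × ℰ → ℝ be continuous, symmetric (invariant under simultaneous permutation of the r-coordinates and the π-components), and consistent (f(r,π,v) = f(r,π',v) whenever Σᵢrᵢπᵢ = Σᵢrᵢπᵢ'). Then there exists a unique continuous function F on 𝒮 × ℰ such that F(Σᵢ rᵢπᵢ, v) = f(r,π,v) for all r ∈ ℝ^d, flags π, and v ∈ ℰ. -/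
/-!
Two decompositions `∑ rᵢ πᵢ = ∑ r'ⱼ π'ⱼ` of the same matrix along flags have the same multiset of
coefficients: `πₖ π'ⱼ` vanishes unless `rₖ = r'ⱼ`, and the doubly stochastic weights
`tr (πₖ π'ⱼ)` then match the fibres of `r` and `r'`. Hence `r' = r ∘ σ` for a permutation `σ`,
and symmetry together with consistency make `F (∑ rᵢ πᵢ, v) := f (r, π, v)` well defined; the
spectral theorem makes it defined everywhere, which also gives uniqueness.

For continuity, `(r, π) ↦ ∑ rᵢ πᵢ` is a continuous surjection from `ℝ^d × ℱ` onto `𝒮`; it is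
proper because `‖r‖ ≤ ‖∑ rᵢ πᵢ‖` and `ℱ` is compact. A proper surjection is a quotient map, and
`F` composed with it is the continuous function `f`.
-/

open Matrix

attribute [local instance] Matrix.frobeniusNormedAddCommGroup Matrix.frobeniusNormedSpace

def SymMat (d : ℕ) : Submodule ℝ (Matrix (Fin d) (Fin d) ℝ) where
  carrier := {A | A.IsSymm}
  add_mem' := Matrix.IsSymm.add
  zero_mem' := Matrix.isSymm_zero
  smul_mem' := fun c _ h => h.smul c

def IsFlag {d : ℕ} (π : Fin d → Matrix (Fin d) (Fin d) ℝ) : Prop :=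
  (∀ i, (π i).IsSymm ∧ π i * π i = π i ∧ (π i).trace = 1) ∧
  (∀ i j, i ≠ j → π i * π j = 0) ∧ (∑ i, π i) = 1

lemma Matrix.frobenius_norm_sq_eq_trace {m n : Type*} [Fintype m] [Fintype n]
    (A : Matrix m n ℝ) : ‖A‖ ^ 2 = (A * Aᵀ).trace := by
  rw [frobenius_norm_def, ← Real.rpow_natCast, ← Real.rpow_mul (by positivity)]
  simp [trace, mul_apply, sq]

namespace IsFlag

variable {d : ℕ} {π π' : Fin d → Matrix (Fin d) (Fin d) ℝ}

lemma comp_perm (hπ : IsFlag π) (σ : Equiv.Perm (Fin d)) : IsFlag (π ∘ σ) :=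
  ⟨fun i => hπ.1 (σ i), fun _ _ hij => hπ.2.1 _ _ (σ.injective.ne hij),
    (Equiv.sum_comp σ π).trans hπ.2.2⟩

lemma map_conjStarAlgAut (hπ : IsFlag π) (U : unitary (Matrix (Fin d) (Fin d) ℝ)) :
    IsFlag fun i => Unitary.conjStarAlgAut ℝ _ U (π i) := by
  refine ⟨fun i => ⟨?_, ?_, ?_⟩, fun i j hij => ?_, ?_⟩ <;> dsimp only
  · rw [← isHermitian_iff_isSymm, IsHermitian, ← star_eq_conjTranspose, ← map_star,
      star_eq_conjTranspose, isHermitian_iff_isSymm.2 (hπ.1 i).1]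
  · rw [← map_mul, (hπ.1 i).2.1]
  · rw [Unitary.conjStarAlgAut_apply, trace_mul_cycle, Unitary.coe_star_mul_self, one_mul,
      (hπ.1 i).2.2]
  · rw [← map_mul, hπ.2.1 i j hij, map_zero]
  · rw [← map_sum, hπ.2.2, map_one]

lemma mul_sum_smul (hπ : IsFlag π) (r : Fin d → ℝ) (k : Fin d) :
    π k * ∑ i, r i • π i = r k • π k := by
  rw [Finset.mul_sum, Finset.sum_eq_single k (fun j _ hjk => by
    rw [Matrix.mul_smul, hπ.2.1 k j hjk.symm, smul_zero]) (by simp),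
    Matrix.mul_smul, (hπ.1 k).2.1]

lemma sum_smul_mul (hπ : IsFlag π) (r : Fin d → ℝ) (k : Fin d) :
    (∑ i, r i • π i) * π k = r k • π k := by
  rw [Finset.sum_mul, Finset.sum_eq_single k (fun j _ hjk => by
    rw [Matrix.smul_mul, hπ.2.1 j k hjk, smul_zero]) (by simp),
    Matrix.smul_mul, (hπ.1 k).2.1]

lemma isSymm_sum_smul (hπ : IsFlag π) (r : Fin d → ℝ) : (∑ i, r i • π i).IsSymm :=
  (SymMat d).sum_mem fun i _ => (SymMat d).smul_mem (r i) (hπ.1 i).1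

lemma mul_eq_zero_of_ne (hπ : IsFlag π) (hπ' : IsFlag π') {r r' : Fin d → ℝ}
    (h : ∑ i, r i • π i = ∑ i, r' i • π' i) {k j : Fin d} (hkj : r k ≠ r' j) :
    π k * π' j = 0 := by
  have h_eigen : r k • (π k * π' j) = r' j • (π k * π' j) := by
    rw [← Matrix.smul_mul, ← hπ.mul_sum_smul, h, Matrix.mul_assoc, hπ'.sum_smul_mul,
      Matrix.mul_smul]
  rw [← sub_eq_zero, ← sub_smul] at h_eigen
  exact (smul_eq_zero.1 h_eigen).resolve_left (sub_ne_zero.2 hkj)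

lemma card_subtype_eq_of_sum_smul_eq (hπ : IsFlag π) (hπ' : IsFlag π') {r r' : Fin d → ℝ}
    (h : ∑ i, r i • π i = ∑ i, r' i • π' i) (t : ℝ) :
    Fintype.card {i // r i = t} = Fintype.card {j // r' j = t} := by
  set w : Fin d → Fin d → ℝ := fun k j => (π k * π' j).trace
  have hrow : ∀ k, ∑ j, w k j = 1 := fun k => by
    rw [← trace_sum, ← Finset.mul_sum, hπ'.2.2, Matrix.mul_one, (hπ.1 k).2.2]
  have hcol : ∀ j, ∑ k, w k j = 1 := fun j => by
    rw [← trace_sum, ← Finset.sum_mul, hπ.2.2, Matrix.one_mul, (hπ'.1 j).2.2]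
  have hsupp : ∀ k j, (if r k = t then w k j else 0) = if r' j = t then w k j else 0 := by
    intro k j
    by_cases hkj : r k = r' j
    · rw [hkj]
    · simp [w, hπ.mul_eq_zero_of_ne hπ' h hkj]
  suffices (Fintype.card {i // r i = t} : ℝ) = Fintype.card {j // r' j = t} from mod_cast this
  calc (Fintype.card {i // r i = t} : ℝ)
      = ∑ k, if r k = t then ∑ j, w k j else 0 := by simp [hrow, Fintype.card_subtype]
    _ = ∑ j, if r' j = t then ∑ k, w k j else 0 := by
        simp only [Finset.ite_sum_zero, hsupp]
        exact Finset.sum_comm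
    _ = Fintype.card {j // r' j = t} := by simp [hcol, Fintype.card_subtype]

theorem exists_perm_of_sum_smul_eq (hπ : IsFlag π) (hπ' : IsFlag π') {r r' : Fin d → ℝ}
    (h : ∑ i, r i • π i = ∑ i, r' i • π' i) : ∃ σ : Equiv.Perm (Fin d), r' ∘ σ = r :=
  ⟨Equiv.ofFiberEquiv fun t =>
      Fintype.equivOfCardEq (hπ.card_subtype_eq_of_sum_smul_eq hπ' h t),
    funext (Equiv.ofFiberEquiv_map _)⟩

theorem apply_eq_of_sum_smul_eq {β : Type*}
    {g : (Fin d → ℝ) → (Fin d → Matrix (Fin d) (Fin d) ℝ) → β}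
    (hsym : ∀ (σ : Equiv.Perm (Fin d)) r π, g (r ∘ σ) (π ∘ σ) = g r π)
    (hconsist : ∀ r π π', IsFlag π → IsFlag π' →
      ∑ i, r i • π i = ∑ i, r i • π' i → g r π = g r π')
    (hπ : IsFlag π) (hπ' : IsFlag π') {r r' : Fin d → ℝ}
    (h : ∑ i, r i • π i = ∑ i, r' i • π' i) : g r π = g r' π' := by
  obtain ⟨σ, rfl⟩ := hπ.exists_perm_of_sum_smul_eq hπ' h
  refine (hconsist _ _ _ hπ (hπ'.comp_perm σ) ?_).trans (hsym σ r' π')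
  rw [h]
  exact (Equiv.sum_comp σ fun i => r' i • π' i).symm

lemma norm_eq_one (hπ : IsFlag π) (i : Fin d) : ‖π i‖ = 1 := by
  refine (pow_eq_one_iff_of_nonneg (norm_nonneg _) two_ne_zero).1 ?_
  rw [frobenius_norm_sq_eq_trace, (hπ.1 i).1.eq, (hπ.1 i).2.1, (hπ.1 i).2.2]

lemma norm_sum_smul_sq (hπ : IsFlag π) (r : Fin d → ℝ) :
    ‖∑ i, r i • π i‖ ^ 2 = ∑ i, r i ^ 2 := by
  rw [frobenius_norm_sq_eq_trace, (hπ.isSymm_sum_smul r).eq, Finset.sum_mul]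
  simp [hπ.mul_sum_smul, trace_sum, (hπ.1 _).2.2, sq]

lemma norm_le_norm_sum_smul (hπ : IsFlag π) (r : Fin d → ℝ) : ‖r‖ ≤ ‖∑ i, r i • π i‖ := by
  refine (pi_norm_le_iff_of_nonneg (norm_nonneg _)).2 fun i => ?_
  refine Real.norm_eq_abs _ ▸ abs_le_of_sq_le_sq ?_ (norm_nonneg _)
  rw [hπ.norm_sum_smul_sq]
  exact Finset.single_le_sum (fun j _ => sq_nonneg (r j)) (Finset.mem_univ i)

end IsFlag

section

variable {d : ℕ}

lemma isFlag_single : IsFlag fun i : Fin d => single i i (1 : ℝ) :=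
  ⟨fun i => ⟨transpose_single i i 1, by simp, trace_single_eq_same i 1⟩,
    fun _ _ hij => single_mul_single_of_ne (h := hij) .., sum_single_one⟩

theorem exists_isFlag_sum_smul_eq {A : Matrix (Fin d) (Fin d) ℝ} (hA : A.IsSymm) :
    ∃ (r : Fin d → ℝ) (π : Fin d → Matrix (Fin d) (Fin d) ℝ), IsFlag π ∧ A = ∑ i, r i • π i := by
  have hH : A.IsHermitian := isHermitian_iff_isSymm.2 hA
  refine ⟨hH.eigenvalues, _, isFlag_single.map_conjStarAlgAut hH.eigenvectorUnitary, ?_⟩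
  conv_lhs => rw [hH.spectral_theorem, ← sum_single_eq_diagonal, map_sum]
  refine Finset.sum_congr rfl fun i _ => ?_
  rw [← map_smul, smul_single, smul_eq_mul, mul_one, Function.comp_apply,
    RCLike.ofReal_real_eq_id, id]

lemma isCompact_setOf_isFlag : IsCompact {π : Fin d → Matrix (Fin d) (Fin d) ℝ | IsFlag π} := by
  have hbdd : {π : Fin d → Matrix (Fin d) (Fin d) ℝ | IsFlag π} ⊆ Metric.closedBall 0 1 :=
    fun π hπ => mem_closedBall_zero_iff.2
      ((pi_norm_le_iff_of_nonneg zero_le_one).2 fun i => (hπ.norm_eq_one i).le)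
  refine Metric.isCompact_of_isClosed_isBounded ?_ (Metric.isBounded_closedBall.subset hbdd)
  simp only [IsFlag, IsSymm, Set.ofPred_and, Set.ofPred_forall]
  refine .inter (isClosed_iInter fun i => .inter ?_ (.inter ?_ ?_))
    (.inter (isClosed_iInter fun i => isClosed_iInter fun j => isClosed_iInter fun _ => ?_) ?_) <;>
    exact isClosed_eq (by fun_prop) (by fun_prop)

end

abbrev Flags (d : ℕ) := {π : Fin d → Matrix (Fin d) (Fin d) ℝ // IsFlag π}

instance (d : ℕ) : CompactSpace (Flags d) :=
  isCompact_iff_compactSpace.1 isCompact_setOf_isFlag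

namespace Flags

variable {d : ℕ}

def sumSmul (p : (Fin d → ℝ) × Flags d) : SymMat d :=
  ⟨∑ i, p.1 i • p.2.1 i, p.2.2.isSymm_sum_smul p.1⟩

lemma continuous_sumSmul : Continuous (sumSmul (d := d)) :=
  (continuous_finsetSum _ fun i _ => ((continuous_apply i).comp continuous_fst).smul
    ((continuous_apply i).comp (continuous_subtype_val.comp continuous_snd))).subtype_mk _

lemma sumSmul_surjective : Function.Surjective (sumSmul (d := d)) := fun x => by
  obtain ⟨r, π, hπ, hx⟩ := exists_isFlag_sum_smul_eq x.2
  exact ⟨(r, ⟨π, hπ⟩), Subtype.ext hx.symm⟩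

lemma isProperMap_sumSmul : IsProperMap (sumSmul (d := d)) := by
  -- Instance search does not see that the subspace topology on `SymMat d` is the one of its
  -- (proper) Frobenius metric.
  have : LocallyCompactSpace (SymMat d) := locallyCompact_of_proper
  refine isProperMap_iff_isCompact_preimage.2 ⟨continuous_sumSmul, fun K hK => ?_⟩
  obtain ⟨R, hR⟩ := hK.isBounded.subset_closedBall 0
  have hc : IsCompact (Metric.closedBall (0 : Fin d → ℝ) R ×ˢ (Set.univ : Set (Flags d))) :=
    (isCompact_closedBall 0 R).prod isCompact_univ
  refine hc.of_isClosed_subset (hK.isClosed.preimage continuous_sumSmul) fun p hp => ⟨?_, trivial⟩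
  have hp_norm : ‖sumSmul p‖ ≤ R := mem_closedBall_zero_iff.1 (hR hp)
  exact mem_closedBall_zero_iff.2 ((p.2.2.norm_le_norm_sum_smul p.1).trans hp_norm)

lemma isQuotientMap_prodMap_sumSmul (E : Type*) [TopologicalSpace E] :
    Topology.IsQuotientMap (Prod.map (sumSmul (d := d)) (id : E → E)) :=
  (isProperMap_sumSmul.prodMap isProperMap_id).isClosedMap.isQuotientMap
    (continuous_sumSmul.prodMap continuous_id) (sumSmul_surjective.prodMap Function.surjective_id)

end Flags

theorem exists_unique_continuous_extension_general (d : ℕ)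
    (E : Type*) [NormedAddCommGroup E]
    (f : (Fin d → ℝ) → (Fin d → Matrix (Fin d) (Fin d) ℝ) → E → ℝ)
    (hcont : ContinuousOn
      (fun p : (Fin d → ℝ) × (Fin d → Matrix (Fin d) (Fin d) ℝ) × E => f p.1 p.2.1 p.2.2)
      (Set.univ ×ˢ {π | IsFlag π} ×ˢ Set.univ))
    (hsym : ∀ (σ : Equiv.Perm (Fin d)) (r : Fin d → ℝ)
      (π : Fin d → Matrix (Fin d) (Fin d) ℝ) (v : E),
      f (r ∘ σ) (π ∘ σ) v = f r π v)
    (hconsist : ∀ (r : Fin d → ℝ) (π π' : Fin d → Matrix (Fin d) (Fin d) ℝ) (v : E),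
      IsFlag π → IsFlag π' → (∑ i, r i • π i) = (∑ i, r i • π' i) → f r π v = f r π' v) :
    ∃! F : SymMat d × E → ℝ, Continuous F ∧
      ∀ (r : Fin d → ℝ) (π : Fin d → Matrix (Fin d) (Fin d) ℝ) (v : E), IsFlag π →
        ∀ x : SymMat d, (x : Matrix (Fin d) (Fin d) ℝ) = ∑ i, r i • π i →
          F (x, v) = f r π v := by
  choose R P hP hRP using fun x : SymMat d => exists_isFlag_sum_smul_eq x.2
  have hF : ∀ r π v, IsFlag π → ∀ x : SymMat d, (x : Matrix (Fin d) (Fin d) ℝ) = ∑ i, r i • π i →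
      f (R x) (P x) v = f r π v := fun r π v hπ x hx =>
    (hP x).apply_eq_of_sum_smul_eq (g := fun r π => f r π v) (fun σ r π => hsym σ r π v)
      (fun r π π' => hconsist r π π' v) hπ ((hRP x).symm.trans hx)
  refine ⟨fun p => f (R p.1) (P p.1) p.2, ⟨?_, hF⟩,
    fun G ⟨_, hG⟩ => funext fun ⟨x, v⟩ => hG _ _ v (hP x) x (hRP x)⟩
  refine (Flags.isQuotientMap_prodMap_sumSmul E).continuous_iff.2 ?_
  have hlift : (fun p => f (R p.1) (P p.1) p.2) ∘ Prod.map Flags.sumSmul id =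
      fun q : ((Fin d → ℝ) × Flags d) × E => f q.1.1 q.1.2.1 q.2 :=
    funext fun q => hF _ _ _ q.1.2.2 _ rfl
  rw [hlift]
  exact hcont.comp_continuous (f := fun q : ((Fin d → ℝ) × Flags d) × E => (q.1.1, q.1.2.1, q.2))
    (by fun_prop) fun q => ⟨trivial, q.1.2.2, trivial⟩

/-- A continuous, symmetric, consistent function `f(r, π, v)` on `ℝ^d × ℱ × ℰ` induces a
unique continuous function `F` on `𝒮 × ℰ` with `F(Σᵢ rᵢπᵢ, v) = f(r, π, v)`. -/
theorem exists_unique_continuous_extension (d : ℕ)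
    (E : Type*) [NormedAddCommGroup E] [InnerProductSpace ℝ E] [FiniteDimensional ℝ E]
    (f : (Fin d → ℝ) → (Fin d → Matrix (Fin d) (Fin d) ℝ) → E → ℝ)
    (hcont : ContinuousOn
      (fun p : (Fin d → ℝ) × (Fin d → Matrix (Fin d) (Fin d) ℝ) × E => f p.1 p.2.1 p.2.2)
      (Set.univ ×ˢ {π | IsFlag π} ×ˢ Set.univ))
    (hsym : ∀ (σ : Equiv.Perm (Fin d)) (r : Fin d → ℝ)
      (π : Fin d → Matrix (Fin d) (Fin d) ℝ) (v : E),
      f (r ∘ σ) (π ∘ σ) v = f r π v)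
    (hconsist : ∀ (r : Fin d → ℝ) (π π' : Fin d → Matrix (Fin d) (Fin d) ℝ) (v : E),
      IsFlag π → IsFlag π' → (∑ i, r i • π i) = (∑ i, r i • π' i) → f r π v = f r π' v) :
    ∃! F : SymMat d × E → ℝ, Continuous F ∧
      ∀ (r : Fin d → ℝ) (π : Fin d → Matrix (Fin d) (Fin d) ℝ) (v : E), IsFlag π →
        ∀ x : SymMat d, (x : Matrix (Fin d) (Fin d) ℝ) = ∑ i, r i • π i →
          F (x, v) = f r π v :=
  exists_unique_continuous_extension_general d E f hcont hsym hconsist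
end
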